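/- Let X ∈ 𝓢^q be exact and closed, and let λ_1, λ_2, …, λ_s be the orbits on supp X of the subgroup Q̃_X = ⟨Q_X, X⟩ of G_X generated by Q_X and X. Then (1) X = X_1 * X_2 * ⋯ * X_s, where X_i ⊆ Sym(λ_i) has support λ_i, and each X_i is exact and closed; and (2) Q_X = Q_1 × Q_2 × ⋯ × Q_s, where Q_i is a Sylow p-subgroup of S_{X_i}. -/

import Mathlib

open Equiv Pointwise

namespace FPS

/-- The support of a permutation of `ℕ`. -/
def psupp (ρ : Equiv.Perm ℕ) : Set ℕ := {ω | ρ ω ≠ ω}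

/-- The support of a set of permutations of `ℕ`. -/
def ssupp (X : Set (Equiv.Perm ℕ)) : Set ℕ := ⋃ ρ ∈ X, psupp ρ

/-- `Sym(α)`: the subgroup of permutations of `ℕ` supported on the subset `α`. -/
def symOn (α : Set ℕ) : Subgroup (Equiv.Perm ℕ) where
  carrier := {g | ∀ ω, ω ∉ α → g ω = ω}
  one_mem' := fun _ _ => rfl
  mul_mem' := by
    intro a b ha hb ω hω
    have hbω := hb ω hω
    have haω := ha ω hω
    show a (b ω) = ω
    rw [hbω, haω]
  inv_mem' := by
    intro a ha ω hω
    have haω := ha ω hω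
    show a⁻¹ ω = ω
    nth_rewrite 1 [← haω]
    exact Equiv.symm_apply_apply a ω

/-- Membership in the family `𝓕`: finite nonempty sets of finitary permutations,
different from `{1}`. -/
def memF (X : Set (Equiv.Perm ℕ)) : Prop :=
  X.Finite ∧ X.Nonempty ∧ X ≠ {1} ∧ ∀ ρ ∈ X, (psupp ρ).Finite

/-- Membership in `𝓢^q`: members of `𝓕` all of whose elements are products of `q`-cycles
(each orbit on the support has size `q`) with full support. -/
def memS (q : ℕ) (X : Set (Equiv.Perm ℕ)) : Prop :=
  memF X ∧ (∀ ρ ∈ X, psupp ρ = ssupp X) ∧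
    ∀ ρ ∈ X, ∀ ω ∈ psupp ρ, (Set.range fun n : ℤ => (ρ ^ n) ω).ncard = q

/-- Right conjugation `x ↦ x^g = g⁻¹ x g`. -/
def conjR (g x : Equiv.Perm ℕ) : Equiv.Perm ℕ := g⁻¹ * x * g

/-- Conjugate of a set of permutations: `X^g`. -/
def conjSet (g : Equiv.Perm ℕ) (X : Set (Equiv.Perm ℕ)) : Set (Equiv.Perm ℕ) := conjR g '' X

/-- The setwise stabilizer (under conjugation) of a set of permutations,
as a subgroup of the full group `Sym(ℕ)`. -/
def setStab (X : Set (Equiv.Perm ℕ)) : Subgroup (Equiv.Perm ℕ) where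
  carrier := {g | ∀ x, x ∈ X ↔ g⁻¹ * x * g ∈ X}
  one_mem' := by
    intro x
    simp
  mul_mem' := by
    intro a b ha hb x
    have h1 := ha x
    have h2 := hb (a⁻¹ * x * a)
    have e : b⁻¹ * (a⁻¹ * x * a) * b = (a * b)⁻¹ * x * (a * b) := by group
    rw [e] at h2
    exact h1.trans h2
  inv_mem' := by
    intro a ha x
    have h := ha (a * x * a⁻¹)
    have e : a⁻¹ * (a * x * a⁻¹) * a = x := by group
    rw [e] at h
    have e2 : a * x * a⁻¹ = a⁻¹⁻¹ * x * a⁻¹ := by group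
    rw [e2] at h
    exact h.symm

/-- `N_X`: the stabilizer of `X` in `G_X = Sym(supp X)`. -/
def NX (X : Set (Equiv.Perm ℕ)) : Subgroup (Equiv.Perm ℕ) := symOn (ssupp X) ⊓ setStab X

/-- `S_X = C_{G_X}(X)`: the pointwise centralizer of `X` in `G_X = Sym(supp X)`. -/
def SX (X : Set (Equiv.Perm ℕ)) : Subgroup (Equiv.Perm ℕ) :=
  symOn (ssupp X) ⊓ Subgroup.centralizer X

/-- `Q` is a Sylow `p`-subgroup of the subgroup `H` (that is, a maximal `p`-subgroup of `H`). -/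
def IsSylowOf {G : Type*} [Group G] (p : ℕ) (Q H : Subgroup G) : Prop :=
  Q ≤ H ∧ IsPGroup p Q ∧ ∀ R : Subgroup G, R ≤ H → IsPGroup p R → Q ≤ R → R = Q

/-- `Ξ_X = ⋃_{g ∈ G_X} X^g`. -/
def Xi (X : Set (Equiv.Perm ℕ)) : Set (Equiv.Perm ℕ) :=
  ⋃ g ∈ (symOn (ssupp X) : Set (Equiv.Perm ℕ)), conjSet g X

/-- `X` is closed: `C_{G_X}(Q_X) ∩ Ξ_X = X` for (any) Sylow `p`-subgroup `Q_X` of `S_X`. -/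
def IsClosedSet (p : ℕ) (X : Set (Equiv.Perm ℕ)) : Prop :=
  ∀ Q : Subgroup (Equiv.Perm ℕ), IsSylowOf p Q (SX X) →
    (Subgroup.centralizer (Q : Set (Equiv.Perm ℕ)) : Set (Equiv.Perm ℕ)) ∩ Xi X = X

/-- `X` is exact: `supp Q_X = supp X` for (any) Sylow `p`-subgroup `Q_X` of `S_X`. -/
def IsExactSet (p : ℕ) (X : Set (Equiv.Perm ℕ)) : Prop :=
  ∀ Q : Subgroup (Equiv.Perm ℕ), IsSylowOf p Q (SX X) →
    ssupp (Q : Set (Equiv.Perm ℕ)) = ssupp X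

/-- `X` is projective: `Q_X = 1`. -/
def IsProjectiveSet (p : ℕ) (X : Set (Equiv.Perm ℕ)) : Prop :=
  ∀ Q : Subgroup (Equiv.Perm ℕ), IsSylowOf p Q (SX X) → Q = ⊥

/-- `X ∈ 𝓕` is irreducible if it is not a product of two members of `𝓕`
with disjoint supports. -/
def IsIrred (X : Set (Equiv.Perm ℕ)) : Prop :=
  memF X ∧ ∀ Y Z : Set (Equiv.Perm ℕ), memF Y → memF Z →
    Disjoint (ssupp Y) (ssupp Z) → X ≠ Y * Z

/-- Two sets of permutations are equivalent if they are conjugate in `Sym(ℕ)`. -/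
def EquivSet (X Y : Set (Equiv.Perm ℕ)) : Prop := ∃ g : Equiv.Perm ℕ, conjSet g X = Y

/-- `D` is a realization of `Δ^s X`: the diagonal of a product of `s` disjointly
supported conjugates of `X`. -/
def IsDelta (s : ℕ) (X D : Set (Equiv.Perm ℕ)) : Prop :=
  ∃ g : Fin s → Equiv.Perm ℕ,
    (∀ i j, i ≠ j → Disjoint (ssupp (conjSet (g i) X)) (ssupp (conjSet (g j) X))) ∧
    D = (fun x => (List.ofFn fun i => conjR (g i) x).prod) '' X

/-- `D` is a realization of the `a`-fold `*`-power `X^a`: a product of `a` disjointly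
supported conjugates of `X`. -/
def IsStarPow (a : ℕ) (X D : Set (Equiv.Perm ℕ)) : Prop :=
  ∃ g : Fin a → Equiv.Perm ℕ,
    (∀ i j, i ≠ j → Disjoint (ssupp (conjSet (g i) X)) (ssupp (conjSet (g j) X))) ∧
    D = (List.ofFn fun i => conjSet (g i) X).prod

/-- `X` is a transitive set: `⟨X⟩` is transitive on `supp X`. -/
def TransitiveSet (X : Set (Equiv.Perm ℕ)) : Prop :=
  ∀ a ∈ ssupp X, ∀ b ∈ ssupp X, ∃ g ∈ Subgroup.closure X, g a = b

lemma mem_setStab {X : Set (Equiv.Perm ℕ)} {g : Equiv.Perm ℕ} :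
    g ∈ setStab X ↔ ∀ x, x ∈ X ↔ g⁻¹ * x * g ∈ X := Iff.rfl

lemma conjR_mem {X : Set (Equiv.Perm ℕ)} {g : Equiv.Perm ℕ} (hg : g ∈ setStab X)
    {x : Equiv.Perm ℕ} (hx : x ∈ X) : g⁻¹ * x * g ∈ X :=
  (mem_setStab.mp hg x).mp hx

lemma conjL_mem {X : Set (Equiv.Perm ℕ)} {g : Equiv.Perm ℕ} (hg : g ∈ setStab X)
    {x : Equiv.Perm ℕ} (hx : x ∈ X) : g * x * g⁻¹ ∈ X := by
  have h := mem_setStab.mp ((setStab X).inv_mem hg) x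
  rw [inv_inv] at h
  exact h.mp hx

/-- The permutation of `X` induced by conjugation by an element of `N_X`. -/
def conjPerm (X : Set (Equiv.Perm ℕ)) (g : NX X) : Equiv.Perm X where
  toFun x := ⟨(g : Equiv.Perm ℕ) * x * (g : Equiv.Perm ℕ)⁻¹,
    conjL_mem (Subgroup.mem_inf.mp g.2).2 x.2⟩
  invFun x := ⟨(g : Equiv.Perm ℕ)⁻¹ * x * (g : Equiv.Perm ℕ),
    conjR_mem (Subgroup.mem_inf.mp g.2).2 x.2⟩
  left_inv x := by
    apply Subtype.ext
    show (g : Equiv.Perm ℕ)⁻¹ * ((g : Equiv.Perm ℕ) * x * (g : Equiv.Perm ℕ)⁻¹) *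
      (g : Equiv.Perm ℕ) = x
    group
  right_inv x := by
    apply Subtype.ext
    show (g : Equiv.Perm ℕ) * ((g : Equiv.Perm ℕ)⁻¹ * x * (g : Equiv.Perm ℕ)) *
      (g : Equiv.Perm ℕ)⁻¹ = x
    group

/-- The action of `N_X` on `X` by conjugation, as a homomorphism `N_X →* Sym(X)`. -/
def MXhom (X : Set (Equiv.Perm ℕ)) : NX X →* Equiv.Perm X where
  toFun := conjPerm X
  map_one' := by
    apply Equiv.ext
    intro x
    apply Subtype.ext
    show ((1 : NX X) : Equiv.Perm ℕ) * x * ((1 : NX X) : Equiv.Perm ℕ)⁻¹ = x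
    simp
  map_mul' a b := by
    apply Equiv.ext
    intro x
    apply Subtype.ext
    show ((a * b : NX X) : Equiv.Perm ℕ) * x * ((a * b : NX X) : Equiv.Perm ℕ)⁻¹
      = (a : Equiv.Perm ℕ) * ((b : Equiv.Perm ℕ) * x * (b : Equiv.Perm ℕ)⁻¹) *
        (a : Equiv.Perm ℕ)⁻¹
    push_cast
    group

/-- `M_X = N_X/S_X`, realized as the image of `N_X` in `Sym(X)` (the action of `N_X`
on `X` is by conjugation, with kernel `S_X`). -/
def MX (X : Set (Equiv.Perm ℕ)) : Subgroup (Equiv.Perm X) := (MXhom X).range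

/-- The permutation module `k[Ω]` of the `G`-set `Ω` has a nonzero projective direct summand. -/
def HasProjSummand (k : Type) [Field k] (G : Type*) [Group G] (Ω : Type*) [MulAction G Ω] :
    Prop :=
  ∃ P W : Submodule (MonoidAlgebra k G) (Representation.ofMulAction k G Ω).asModule,
    IsCompl P W ∧ P ≠ ⊥ ∧ Module.Projective (MonoidAlgebra k G) P

/-- `X` is a fixed point set: `X ∈ 𝓢^q`, `X` is closed, and the permutation
`k M_X`-module `k[X]` has a nonzero projective direct summand. -/
def IsFPS (p q : ℕ) (k : Type) [Field k] (X : Set (Equiv.Perm ℕ)) : Prop :=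
  memS q X ∧ IsClosedSet p X ∧ HasProjSummand k (MX X) X

/-- `X` and `Y` (with disjoint supports) are coprime: `N_{X*Y} = N_X × N_Y`. -/
def CoprimeSets (X Y : Set (Equiv.Perm ℕ)) : Prop := NX (X * Y) = NX X ⊔ NX Y

/-- `X` is projective-free: no factor in a decomposition of `X` into irreducibles
is projective. -/
def ProjFree (p : ℕ) (X : Set (Equiv.Perm ℕ)) : Prop :=
  ∀ L : List (Set (Equiv.Perm ℕ)), (∀ Y ∈ L, IsIrred Y) →
    L.Pairwise (fun A B => Disjoint (ssupp A) (ssupp B)) →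
    X = L.prod → ∀ Y ∈ L, ¬ IsProjectiveSet p Y



open scoped Classical

theorem _root_.Equiv.Perm.inv_apply_self (f : Equiv.Perm ℕ) (x : ℕ) : f⁻¹ (f x) = x :=
  Equiv.symm_apply_apply f x

theorem _root_.Equiv.Perm.apply_inv_self (f : Equiv.Perm ℕ) (x : ℕ) : f (f⁻¹ x) = x :=
  Equiv.apply_symm_apply f x


lemma psupp_one : psupp 1 = (∅ : Set ℕ) := by
  ext ω; simp [psupp]

lemma eq_one_of_psupp_empty {σ : Equiv.Perm ℕ} (h : psupp σ = ∅) : σ = 1 := by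
  ext ω
  by_contra hne
  exact absurd (Set.eq_empty_iff_forall_notMem.mp h ω) (by simpa [psupp] using hne)

lemma apply_mem_psupp {σ : Equiv.Perm ℕ} {ω : ℕ} (h : ω ∈ psupp σ) : σ ω ∈ psupp σ := by
  simp only [psupp, Set.mem_setOf_eq] at *
  intro he
  exact h (σ.injective he)

lemma mem_symOn {α : Set ℕ} {g : Equiv.Perm ℕ} :
    g ∈ symOn α ↔ ∀ ω, ω ∉ α → g ω = ω := Iff.rfl

lemma symOn_mono {α β : Set ℕ} (h : α ⊆ β) : symOn α ≤ symOn β := by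
  intro g hg ω hω
  exact hg ω (fun hc => hω (h hc))

lemma psupp_subset_of_mem_symOn {α : Set ℕ} {g : Equiv.Perm ℕ} (hg : g ∈ symOn α) :
    psupp g ⊆ α := by
  intro ω hω
  by_contra hc
  exact hω (hg ω hc)

lemma symOn_preserves {α : Set ℕ} {g : Equiv.Perm ℕ} (hg : g ∈ symOn α) (ω : ℕ) :
    ω ∈ α ↔ g ω ∈ α := by
  constructor
  · intro hω
    by_contra hc
    have h2 : g (g ω) = g ω := hg _ hc
    have := g.injective h2
    rw [this] at hc
    exact hc hω
  · intro hω
    by_contra hc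
    rw [hg ω hc] at hω
    exact hc hω

lemma disjoint_psupp_commute {a b : Equiv.Perm ℕ} (h : Disjoint (psupp a) (psupp b)) :
    Commute a b := by
  apply Equiv.Perm.Disjoint.commute
  intro ω
  by_contra hc
  push_neg at hc
  exact Set.disjoint_left.mp h (show ω ∈ psupp a from hc.1) hc.2

/-- `σ` preserves the set `lam`. -/
def Pres (lam : Set ℕ) (σ : Equiv.Perm ℕ) : Prop := ∀ ω, ω ∈ lam ↔ σ ω ∈ lam

lemma Pres.one (lam : Set ℕ) : Pres lam 1 := fun _ => Iff.rfl

lemma Pres.mul {lam : Set ℕ} {σ τ : Equiv.Perm ℕ} (hσ : Pres lam σ) (hτ : Pres lam τ) :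
    Pres lam (σ * τ) := by
  intro ω
  exact (hτ ω).trans (hσ (τ ω))

lemma Pres.inv {lam : Set ℕ} {σ : Equiv.Perm ℕ} (hσ : Pres lam σ) : Pres lam σ⁻¹ := by
  intro ω
  have := hσ (σ⁻¹ ω)
  rw [Equiv.Perm.apply_inv_self] at this
  exact this.symm

lemma Pres.pow {lam : Set ℕ} {σ : Equiv.Perm ℕ} (hσ : Pres lam σ) (n : ℕ) :
    Pres lam (σ ^ n) := by
  induction n with
  | zero => simpa using Pres.one lam
  | succ n ih => rw [pow_succ]; exact ih.mul hσ

lemma Pres.zpow {lam : Set ℕ} {σ : Equiv.Perm ℕ} (hσ : Pres lam σ) (n : ℤ) :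
    Pres lam (σ ^ n) := by
  cases n with
  | ofNat n => simpa using hσ.pow n
  | negSucc n => rw [zpow_negSucc]; exact (hσ.pow (n+1)).inv

lemma Pres.of_symOn {lam : Set ℕ} {σ : Equiv.Perm ℕ} (h : σ ∈ symOn lam) : Pres lam σ :=
  fun ω => symOn_preserves h ω

/-- Restriction of a permutation to an invariant set (identity if not invariant). -/
noncomputable def restr (lam : Set ℕ) (σ : Equiv.Perm ℕ) : Equiv.Perm ℕ :=
  if h : Pres lam σ then Equiv.Perm.ofSubtype (σ.subtypePerm (fun x => (h x).symm)) else 1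

lemma restr_apply_of_mem {lam : Set ℕ} {σ : Equiv.Perm ℕ} (h : Pres lam σ) {ω : ℕ}
    (hω : ω ∈ lam) : restr lam σ ω = σ ω := by
  rw [restr, dif_pos h]
  rw [Equiv.Perm.ofSubtype_apply_of_mem _ hω]
  rfl

lemma restr_apply_of_not_mem {lam : Set ℕ} (σ : Equiv.Perm ℕ) {ω : ℕ}
    (hω : ω ∉ lam) : restr lam σ ω = ω := by
  rw [restr]
  split
  · exact Equiv.Perm.ofSubtype_apply_of_not_mem _ hω
  · rfl

lemma restr_mem_symOn {lam : Set ℕ} (σ : Equiv.Perm ℕ) : restr lam σ ∈ symOn lam :=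
  fun _ hω => restr_apply_of_not_mem σ hω

lemma Pres.restr {lam : Set ℕ} {σ : Equiv.Perm ℕ} : Pres lam (FPS.restr lam σ) :=
  Pres.of_symOn (restr_mem_symOn σ)

lemma psupp_restr {lam : Set ℕ} {σ : Equiv.Perm ℕ} (h : Pres lam σ) :
    psupp (restr lam σ) = psupp σ ∩ lam := by
  ext ω
  by_cases hω : ω ∈ lam
  · simp only [psupp, Set.mem_setOf_eq, Set.mem_inter_iff, restr_apply_of_mem h hω]
    tauto
  · simp only [psupp, Set.mem_setOf_eq, Set.mem_inter_iff, restr_apply_of_not_mem σ hω]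
    tauto

lemma restr_one (lam : Set ℕ) : restr lam 1 = 1 := by
  ext ω
  by_cases hω : ω ∈ lam
  · rw [restr_apply_of_mem (Pres.one lam) hω]
  · rw [restr_apply_of_not_mem _ hω]; rfl

lemma restr_mul {lam : Set ℕ} {σ τ : Equiv.Perm ℕ} (hσ : Pres lam σ) (hτ : Pres lam τ) :
    restr lam (σ * τ) = restr lam σ * restr lam τ := by
  ext ω
  by_cases hω : ω ∈ lam
  · rw [restr_apply_of_mem (hσ.mul hτ) hω]
    show _ = restr lam σ (restr lam τ ω)
    rw [restr_apply_of_mem hτ hω, restr_apply_of_mem hσ ((hτ ω).mp hω)]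
    rfl
  · rw [restr_apply_of_not_mem _ hω]
    show _ = restr lam σ (restr lam τ ω)
    rw [restr_apply_of_not_mem _ hω, restr_apply_of_not_mem _ hω]

lemma restr_pow {lam : Set ℕ} {σ : Equiv.Perm ℕ} (hσ : Pres lam σ) (n : ℕ) :
    restr lam (σ ^ n) = (restr lam σ) ^ n := by
  induction n with
  | zero => simpa using restr_one lam
  | succ n ih => rw [pow_succ, restr_mul (hσ.pow n) hσ, ih, pow_succ]

lemma restr_eq_self {lam : Set ℕ} {σ : Equiv.Perm ℕ} (hσ : σ ∈ symOn lam) :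
    restr lam σ = σ := by
  ext ω
  by_cases hω : ω ∈ lam
  · rw [restr_apply_of_mem (Pres.of_symOn hσ) hω]
  · rw [restr_apply_of_not_mem _ hω, hσ ω hω]

section ListLemmas

variable {G : Type*} [Group G]

lemma ofFn_prod_mul {s : ℕ} (a b : Fin s → G)
    (h : ∀ i j, i ≠ j → Commute (a i) (b j)) :
    (List.ofFn a).prod * (List.ofFn b).prod = (List.ofFn fun i => a i * b i).prod := by
  induction s with
  | zero => simp
  | succ s ih =>
    rw [List.ofFn_succ, List.ofFn_succ, List.ofFn_succ, List.prod_cons, List.prod_cons,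
      List.prod_cons]
    have hc : Commute (List.ofFn fun i : Fin s => a i.succ).prod (b 0) := by
      apply Commute.list_prod_left
      intro x hx
      rw [List.mem_ofFn] at hx
      obtain ⟨i, rfl⟩ := hx
      exact h i.succ 0 (Fin.succ_ne_zero i)
    calc a 0 * (List.ofFn fun i : Fin s => a i.succ).prod *
          (b 0 * (List.ofFn fun i : Fin s => b i.succ).prod)
        = a 0 * ((List.ofFn fun i : Fin s => a i.succ).prod * b 0) *
          (List.ofFn fun i : Fin s => b i.succ).prod := by group
      _ = a 0 * (b 0 * (List.ofFn fun i : Fin s => a i.succ).prod) *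
          (List.ofFn fun i : Fin s => b i.succ).prod := by rw [hc.eq]
      _ = (a 0 * b 0) * ((List.ofFn fun i : Fin s => a i.succ).prod *
          (List.ofFn fun i : Fin s => b i.succ).prod) := by group
      _ = _ := by
          rw [ih (fun i => a i.succ) (fun i => b i.succ)
            (fun i j hij => h i.succ j.succ (fun hc' => hij (Fin.succ_injective _ hc')))]

lemma ofFn_prod_one {s : ℕ} : (List.ofFn fun _ : Fin s => (1 : G)).prod = 1 := by
  induction s with
  | zero => simp
  | succ s ih => rw [List.ofFn_succ, List.prod_cons]; simpa using ih

lemma ofFn_prod_pow {s : ℕ} (a : Fin s → G)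
    (h : ∀ i j, i ≠ j → Commute (a i) (a j)) (n : ℕ) :
    (List.ofFn a).prod ^ n = (List.ofFn fun i => a i ^ n).prod := by
  induction n with
  | zero => simpa using ofFn_prod_one.symm
  | succ n ih =>
    rw [pow_succ, ih, ofFn_prod_mul (fun i => a i ^ n) a
      (fun i j hij => ((h i j hij).symm.pow_right n).symm)]
    simp [pow_succ]

lemma list_prod_apply_of_fixed (l : List (Equiv.Perm ℕ)) (ω : ℕ)
    (h : ∀ g ∈ l, g ω = ω) : l.prod ω = ω := by
  induction l with
  | nil => rfl
  | cons g t ih =>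
    rw [List.prod_cons]
    show g (t.prod ω) = ω
    rw [ih (fun k hk => h k (List.mem_cons_of_mem g hk)), h g (List.mem_cons_self)]

lemma ofFn_prod_apply {s : ℕ} (a : Fin s → Equiv.Perm ℕ) (j : Fin s) (ω : ℕ)
    (h : ∀ i, i ≠ j → a i ω = ω ∧ a i (a j ω) = a j ω) :
    (List.ofFn a).prod ω = a j ω := by
  induction s with
  | zero => exact absurd j.2 (Nat.not_lt_zero _)
  | succ s ih =>
    rw [List.ofFn_succ, List.prod_cons]
    show a 0 ((List.ofFn fun i : Fin s => a i.succ).prod ω) = a j ω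
    rcases Fin.eq_zero_or_eq_succ j with hj | ⟨k, hj⟩
    · subst hj
      have hfix : (List.ofFn fun i : Fin s => a i.succ).prod ω = ω := by
        apply list_prod_apply_of_fixed
        intro g hg
        rw [List.mem_ofFn] at hg
        obtain ⟨i, rfl⟩ := hg
        exact (h i.succ (Fin.succ_ne_zero i)).1
      rw [hfix]
    · subst hj
      have htail : (List.ofFn fun i : Fin s => a i.succ).prod ω = a k.succ ω := by
        apply ih (fun i => a i.succ) k
        intro i hik
        exact h i.succ (fun hc => hik (Fin.succ_injective _ hc))
      rw [htail]
      exact (h 0 (Ne.symm (Fin.succ_ne_zero k))).2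

lemma list_prod_mem_setProd {s : ℕ} (Xs : Fin s → Set (Equiv.Perm ℕ))
    (x : Fin s → Equiv.Perm ℕ) (hx : ∀ i, x i ∈ Xs i) :
    (List.ofFn x).prod ∈ (List.ofFn Xs).prod := by
  induction s with
  | zero => simp
  | succ s ih =>
    rw [List.ofFn_succ, List.ofFn_succ, List.prod_cons, List.prod_cons]
    exact Set.mul_mem_mul (hx 0) (ih (fun i => Xs i.succ) (fun i => x i.succ)
      (fun i => hx i.succ))

lemma mem_setProd_list {s : ℕ} (Xs : Fin s → Set (Equiv.Perm ℕ))
    (z : Equiv.Perm ℕ) (hz : z ∈ (List.ofFn Xs).prod) :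
    ∃ x : Fin s → Equiv.Perm ℕ, (∀ i, x i ∈ Xs i) ∧ z = (List.ofFn x).prod := by
  induction s generalizing z with
  | zero =>
    refine ⟨fun i => 1, fun i => absurd i.2 (Nat.not_lt_zero _), ?_⟩
    simpa using hz
  | succ s ih =>
    rw [List.ofFn_succ, List.prod_cons] at hz
    obtain ⟨u, hu, v, hv, rfl⟩ := hz
    obtain ⟨x, hx, rfl⟩ := ih (fun i => Xs i.succ) v hv
    refine ⟨Fin.cons u x, ?_, ?_⟩
    · intro i
      rcases Fin.eq_zero_or_eq_succ i with hi | ⟨k, hi⟩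
      · subst hi; simpa using hu
      · subst hi; simpa using hx k
    · rw [List.ofFn_succ, List.prod_cons]
      simp

end ListLemmas

lemma ofFn_prod_one_monoid {G : Type*} [Monoid G] {s : ℕ} :
    (List.ofFn fun _ : Fin s => (1 : G)).prod = 1 := by
  induction s with
  | zero => simp
  | succ s ih => rw [List.ofFn_succ, List.prod_cons]; simpa using ih
section Agree

lemma agree_pow_apply {lam : Set ℕ} {σ τ : Equiv.Perm ℕ} (hσ : Pres lam σ)
    (hagree : ∀ ω ∈ lam, σ ω = τ ω) (n : ℕ) {ω : ℕ} (hω : ω ∈ lam) :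
    (σ ^ n) ω = (τ ^ n) ω := by
  induction n with
  | zero => rfl
  | succ n ih =>
    rw [pow_succ', pow_succ']
    show σ ((σ ^ n) ω) = τ ((τ ^ n) ω)
    have hmem : (σ ^ n) ω ∈ lam := (hσ.pow n ω).mp hω
    rw [ih, ← ih]
    exact hagree _ hmem

lemma agree_inv_apply {lam : Set ℕ} {σ τ : Equiv.Perm ℕ} (hσ : Pres lam σ)
    (hagree : ∀ ω ∈ lam, σ ω = τ ω) {ω : ℕ} (hω : ω ∈ lam) :
    σ⁻¹ ω = τ⁻¹ ω := by
  have h1 : σ⁻¹ ω ∈ lam := (hσ.inv ω).mp hω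
  have h2 : τ (σ⁻¹ ω) = ω := by
    rw [← hagree _ h1, Equiv.Perm.apply_inv_self]
  have h3 : τ⁻¹ (τ (σ⁻¹ ω)) = τ⁻¹ ω := congrArg _ h2
  rwa [Equiv.Perm.inv_apply_self] at h3

lemma agree_zpow_apply {lam : Set ℕ} {σ τ : Equiv.Perm ℕ} (hσ : Pres lam σ)
    (hτ : Pres lam τ) (hagree : ∀ ω ∈ lam, σ ω = τ ω) (n : ℤ) {ω : ℕ} (hω : ω ∈ lam) :
    (σ ^ n) ω = (τ ^ n) ω := by
  cases n with
  | ofNat n => simpa using agree_pow_apply hσ hagree n hω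
  | negSucc n =>
    rw [zpow_negSucc, zpow_negSucc, ← inv_pow, ← inv_pow]
    refine agree_pow_apply hσ.inv (fun v hv => ?_) (n+1) hω
    exact agree_inv_apply hσ hagree hv

/-- The orbit of a point under the cyclic group of a permutation. -/
def orbitOf (σ : Equiv.Perm ℕ) (ω : ℕ) : Set ℕ := Set.range fun n : ℤ => (σ ^ n) ω

lemma orbitOf_eq_of_agree {lam : Set ℕ} {σ τ : Equiv.Perm ℕ} (hσ : Pres lam σ)
    (hτ : Pres lam τ) (hagree : ∀ ω ∈ lam, σ ω = τ ω) {ω : ℕ} (hω : ω ∈ lam) :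
    orbitOf σ ω = orbitOf τ ω := by
  unfold orbitOf
  have : (fun n : ℤ => (σ ^ n) ω) = fun n : ℤ => (τ ^ n) ω :=
    funext fun n => agree_zpow_apply hσ hτ hagree n hω
  rw [this]

lemma orbitOf_subset {lam : Set ℕ} {σ : Equiv.Perm ℕ} (hσ : Pres lam σ) {ω : ℕ}
    (hω : ω ∈ lam) : orbitOf σ ω ⊆ lam := by
  rintro v ⟨n, rfl⟩
  exact (hσ.zpow n ω).mp hω

lemma psupp_conj (g x : Equiv.Perm ℕ) : psupp (g⁻¹ * x * g) = ⇑g ⁻¹' psupp x := by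
  ext ω
  simp only [psupp, Set.mem_setOf_eq, Set.mem_preimage]
  show g⁻¹ (x (g ω)) ≠ ω ↔ x (g ω) ≠ g ω
  constructor
  · intro h hc
    exact h (by rw [hc, Equiv.Perm.inv_apply_self])
  · intro h hc
    apply h
    have := congrArg g hc
    rwa [Equiv.Perm.apply_inv_self] at this

lemma conj_zpow_apply (g x : Equiv.Perm ℕ) (n : ℤ) (ω : ℕ) :
    ((g⁻¹ * x * g) ^ n) ω = g⁻¹ ((x ^ n) (g ω)) := by
  have : (g⁻¹ * x * g) ^ n = g⁻¹ * x ^ n * g := by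
    have h := conj_zpow (i := n) (a := g⁻¹) (b := x)
    simpa using h
  rw [this]; rfl

lemma orbitOf_conj (g x : Equiv.Perm ℕ) (ω : ℕ) :
    orbitOf (g⁻¹ * x * g) ω = ⇑g⁻¹ '' orbitOf x (g ω) := by
  unfold orbitOf
  ext v
  constructor
  · rintro ⟨n, rfl⟩
    exact ⟨(x ^ n) (g ω), ⟨n, rfl⟩, (conj_zpow_apply g x n ω).symm⟩
  · rintro ⟨u, ⟨n, rfl⟩, rfl⟩
    exact ⟨n, conj_zpow_apply g x n ω⟩

end Agree
section ConjLemma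

lemma mem_symOn_of_psupp {α : Set ℕ} {σ : Equiv.Perm ℕ} (h : psupp σ ⊆ α) : σ ∈ symOn α := by
  intro ω hω
  by_contra hc
  exact hω (h hc)

lemma cycleType_key {q : ℕ} {α : Set ℕ} [Fintype ↥α]
    (f : Equiv.Perm ℕ) (hfP : Pres α f) (hfs : psupp f = α)
    (hfq : ∀ ω ∈ α, (orbitOf f ω).ncard = q) :
    (f.subtypePerm (fun x => (hfP x).symm)).cycleType =
      Multiset.replicate (f.subtypePerm (fun x => (hfP x).symm)).cycleType.card q ∧
    (f.subtypePerm (fun x => (hfP x).symm)).cycleType.card * q = Fintype.card ↥α := by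
  classical
  set f' : Equiv.Perm ↥α := f.subtypePerm (fun x => (hfP x).symm) with hf'
  have hzval : ∀ (n : ℤ) (x : ↥α), ((f' ^ n) x : ℕ) = (f ^ n) (x : ℕ) := by
    intro n x
    rw [hf', Equiv.Perm.subtypePerm_zpow]
    rfl
  have hallq : ∀ n ∈ f'.cycleType, n = q := by
    intro n hn
    rw [Equiv.Perm.cycleType_def, Multiset.mem_map] at hn
    obtain ⟨c, hc, rfl⟩ := hn
    rw [← Finset.mem_def] at hc
    have hcyc : c.IsCycle := (Equiv.Perm.mem_cycleFactorsFinset_iff.mp hc).1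
    obtain ⟨x, hx⟩ := hcyc.nonempty_support
    have hceq : c = f'.cycleOf x := Equiv.Perm.cycle_is_cycleOf hx hc
    have hxs : x ∈ f'.support := Equiv.Perm.mem_cycleFactorsFinset_support_le hc hx
    have hsupc : Subtype.val '' (↑c.support : Set ↥α) = orbitOf f (x : ℕ) := by
      ext v
      constructor
      · rintro ⟨y, hy, rfl⟩
        rw [Finset.mem_coe, hceq, Equiv.Perm.mem_support_cycleOf_iff] at hy
        obtain ⟨m, hm⟩ := hy.1
        exact ⟨m, show (f ^ m) (x:ℕ) = (y:ℕ) by rw [← hzval m x, hm]⟩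
      · rintro ⟨m, rfl⟩
        refine ⟨(f' ^ m) x, ?_, show ((f' ^ m) x : ℕ) = (f ^ m) (x:ℕ) from hzval m x⟩
        rw [Finset.mem_coe, hceq, Equiv.Perm.mem_support_cycleOf_iff]
        exact ⟨⟨m, rfl⟩, hxs⟩
    have hcard : (Finset.card c.support : ℕ) = q := by
      have h1 : ((↑c.support : Set ↥α)).ncard = c.support.card := Set.ncard_coe_finset _
      have h2 : (Subtype.val '' (↑c.support : Set ↥α)).ncard =
          ((↑c.support : Set ↥α)).ncard := Set.ncard_image_of_injective _ Subtype.val_injective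
      rw [← h1, ← h2, hsupc]
      exact hfq _ x.2
    exact hcard
  have hsum : f'.cycleType.sum = Fintype.card ↥α := by
    rw [Equiv.Perm.sum_cycleType]
    have : f'.support = Finset.univ := by
      rw [Finset.eq_univ_iff_forall]
      intro y
      rw [Equiv.Perm.mem_support]
      intro hy
      have : f (y : ℕ) = (y : ℕ) := congrArg Subtype.val hy
      have hy2 : (y : ℕ) ∈ psupp f := hfs ▸ y.2
      exact hy2 this
    rw [this, Finset.card_univ]
  have hrep : f'.cycleType = Multiset.replicate f'.cycleType.card q :=
    (Multiset.eq_replicate_card).mpr hallq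
  refine ⟨hrep, ?_⟩
  have : f'.cycleType.sum = f'.cycleType.card * q := by
    rw [hrep]
    simp [Multiset.sum_replicate, mul_comm]
  rw [← this, hsum]

lemma conj_qcycles {q : ℕ} (hq : q ≠ 0) {α : Set ℕ} (hα : α.Finite)
    {σ τ : Equiv.Perm ℕ} (hσs : psupp σ = α) (hτs : psupp τ = α)
    (hσq : ∀ ω ∈ α, (orbitOf σ ω).ncard = q)
    (hτq : ∀ ω ∈ α, (orbitOf τ ω).ncard = q) :
    ∃ g ∈ symOn α, g⁻¹ * σ * g = τ := by
  classical
  letI : Fintype ↥α := hα.fintype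
  have hσOn : σ ∈ symOn α := mem_symOn_of_psupp (le_of_eq hσs)
  have hτOn : τ ∈ symOn α := mem_symOn_of_psupp (le_of_eq hτs)
  have hσP : Pres α σ := Pres.of_symOn hσOn
  have hτP : Pres α τ := Pres.of_symOn hτOn
  obtain ⟨hrep1, hcard1⟩ := cycleType_key (q := q) σ hσP hσs hσq
  obtain ⟨hrep2, hcard2⟩ := cycleType_key (q := q) τ hτP hτs hτq
  have hcardeq : (σ.subtypePerm (fun x => (hσP x).symm)).cycleType.card = (τ.subtypePerm (fun x => (hτP x).symm)).cycleType.card :=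
    Nat.eq_of_mul_eq_mul_right (Nat.pos_of_ne_zero hq) (hcard1.trans hcard2.symm)
  have hct : (σ.subtypePerm (fun x => (hσP x).symm)).cycleType = (τ.subtypePerm (fun x => (hτP x).symm)).cycleType := by
    rw [hrep1, hrep2, hcardeq]
  have hconj : IsConj (σ.subtypePerm (fun x => (hσP x).symm)) (τ.subtypePerm (fun x => (hτP x).symm)) :=
    Equiv.Perm.isConj_iff_cycleType_eq.mpr hct
  rw [isConj_iff] at hconj
  obtain ⟨c, hc⟩ := hconj
  have hofσ : Equiv.Perm.ofSubtype (σ.subtypePerm (fun x => (hσP x).symm)) = σ :=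
    Equiv.Perm.ofSubtype_subtypePerm (fun x => (hσP x).symm) (fun x hx => hσs ▸ (hx : x ∈ psupp σ))
  have hofτ : Equiv.Perm.ofSubtype (τ.subtypePerm (fun x => (hτP x).symm)) = τ :=
    Equiv.Perm.ofSubtype_subtypePerm (fun x => (hτP x).symm) (fun x hx => hτs ▸ (hx : x ∈ psupp τ))
  refine ⟨(Equiv.Perm.ofSubtype c)⁻¹, ?_, ?_⟩
  · apply (symOn α).inv_mem
    intro ω hω
    exact Equiv.Perm.ofSubtype_apply_of_not_mem c hω
  · have := congrArg Equiv.Perm.ofSubtype hc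
    rw [map_mul, map_mul, map_inv, hofσ, hofτ] at this
    rw [inv_inv]
    rw [← this]
    done

end ConjLemma
section FamProd

/-- The internal product of a family of pairwise elementwise-commuting subgroups. -/
def famProd {s : ℕ} (F : Fin s → Subgroup (Equiv.Perm ℕ))
    (hcomm : ∀ i j, i ≠ j → ∀ a ∈ F i, ∀ b ∈ F j, Commute a b) :
    Subgroup (Equiv.Perm ℕ) where
  carrier := {t | ∃ a : Fin s → Equiv.Perm ℕ, (∀ i, a i ∈ F i) ∧ t = (List.ofFn a).prod}
  one_mem' := ⟨fun _ => 1, fun i => (F i).one_mem, ofFn_prod_one.symm⟩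
  mul_mem' := by
    rintro x y ⟨a, ha, rfl⟩ ⟨b, hb, rfl⟩
    refine ⟨fun i => a i * b i, fun i => (F i).mul_mem (ha i) (hb i), ?_⟩
    rw [← ofFn_prod_mul a b (fun i j hij => hcomm i j hij _ (ha i) _ (hb j))]
  inv_mem' := by
    rintro x ⟨a, ha, rfl⟩
    refine ⟨fun i => (a i)⁻¹, fun i => (F i).inv_mem (ha i), ?_⟩
    have h2 : (List.ofFn fun i => (a i)⁻¹).prod * (List.ofFn a).prod = 1 := by
      rw [ofFn_prod_mul (fun i => (a i)⁻¹) a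
        (fun i j hij => ((hcomm j i (Ne.symm hij) _ (ha j) _ (ha i)).symm.inv_left))]
      simp only [inv_mul_cancel]
      exact ofFn_prod_one
    exact (eq_inv_of_mul_eq_one_left h2).symm

lemma mem_famProd {s : ℕ} {F : Fin s → Subgroup (Equiv.Perm ℕ)} {hcomm} {t : Equiv.Perm ℕ} :
    t ∈ famProd F hcomm ↔
      ∃ a : Fin s → Equiv.Perm ℕ, (∀ i, a i ∈ F i) ∧ t = (List.ofFn a).prod := Iff.rfl

end FamProd

section Finiteness

lemma symOn_finite {α : Set ℕ} (hα : α.Finite) : Finite ↥(symOn α) := by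
  letI : Fintype ↥α := hα.fintype
  have : Function.Injective (fun g : ↥(symOn α) => fun a : ↥α =>
      (⟨(g : Equiv.Perm ℕ) a, (symOn_preserves g.2 a).mp a.2⟩ : ↥α)) := by
    intro g₁ g₂ h
    apply Subtype.ext
    apply Equiv.ext
    intro ω
    by_cases hω : ω ∈ α
    · have := congrFun h ⟨ω, hω⟩
      exact congrArg Subtype.val this
    · rw [g₁.2 ω hω, g₂.2 ω hω]
  exact Finite.of_injective _ this

lemma subgroup_finite_of_le {H K : Subgroup (Equiv.Perm ℕ)} (hK : Finite ↥K) (h : H ≤ K) :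
    Finite ↥H :=
  Finite.of_injective (Subgroup.inclusion h) (Subgroup.inclusion_injective h)

end Finiteness

section SylowConj

lemma isSylowOf_conj {p : ℕ} (hp : p.Prime) {H Q₁ Q₂ : Subgroup (Equiv.Perm ℕ)}
    (hH : Finite ↥H) (h1 : IsSylowOf p Q₁ H) (h2 : IsSylowOf p Q₂ H) :
    ∃ c ∈ H, ∀ x : Equiv.Perm ℕ, x ∈ Q₂ ↔ c⁻¹ * x * c ∈ Q₁ := by
  classical
  haveI := Fact.mk hp
  -- pass to subgroups of ↥H
  have key : ∀ Q : Subgroup (Equiv.Perm ℕ), IsSylowOf p Q H →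
      ∃ P : Sylow p ↥H, (P : Subgroup ↥H) = Q.subgroupOf H := by
    intro Q hQ
    have hple : Q ≤ H := hQ.1
    have hpg : IsPGroup p (Q.subgroupOf H) := by
      apply IsPGroup.comap_of_injective hQ.2.1 H.subtype Subtype.val_injective
    obtain ⟨P, hP⟩ := hpg.exists_le_sylow
    have hmap : Subgroup.map H.subtype (P : Subgroup ↥H) = Q := by
      apply hQ.2.2
      · rintro x ⟨y, hy, rfl⟩
        exact y.2
      · exact (P.2).map H.subtype
      · calc Q = Subgroup.map H.subtype (Q.subgroupOf H) := by
              rw [Subgroup.subgroupOf_map_subtype, inf_eq_left.mpr hple]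
          _ ≤ Subgroup.map H.subtype (P : Subgroup ↥H) := Subgroup.map_mono hP
    refine ⟨P, ?_⟩
    have hinj := Subgroup.map_injective (H.subtype_injective)
    apply hinj
    rw [hmap, Subgroup.subgroupOf_map_subtype, inf_eq_left.mpr hple]
  obtain ⟨P₁, hP₁⟩ := key Q₁ h1
  obtain ⟨P₂, hP₂⟩ := key Q₂ h2
  obtain ⟨c, hc⟩ := MulAction.exists_smul_eq ↥H P₁ P₂
  have hP : Q₂.subgroupOf H = MulAut.conj c • (P₁ : Subgroup ↥H) := by
    rw [← hP₂, ← hc, Sylow.smul_def, Sylow.pointwise_smul_def]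
  refine ⟨(c : Equiv.Perm ℕ), c.2, ?_⟩
  intro x
  by_cases hxH : x ∈ H
  · have hconjH : (c : Equiv.Perm ℕ)⁻¹ * x * (c : Equiv.Perm ℕ) ∈ H :=
      H.mul_mem (H.mul_mem (H.inv_mem c.2) hxH) c.2
    rw [← Subgroup.mem_subgroupOf (H := Q₂) (K := H) (h := ⟨x, hxH⟩),
      ← Subgroup.mem_subgroupOf (H := Q₁) (K := H) (h := ⟨_, hconjH⟩), hP, ← hP₁,
      Subgroup.mem_pointwise_smul_iff_inv_smul_mem]
    constructor
    · intro h
      convert h using 1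
      rw [MulAut.smul_def, MulAut.conj_inv_apply]
      rfl
    · intro h
      convert h using 1
      rw [MulAut.smul_def, MulAut.conj_inv_apply]
      rfl
  · constructor
    · intro hx
      exact absurd (h2.1 hx) hxH
    · intro hx
      have := h1.1 hx
      have hxh : x = (c:Equiv.Perm ℕ) * ((c:Equiv.Perm ℕ)⁻¹ * x * (c:Equiv.Perm ℕ)) * (c:Equiv.Perm ℕ)⁻¹ := by group
      rw [hxh] at hxH
      exact absurd (H.mul_mem (H.mul_mem c.2 this) (H.inv_mem c.2)) hxH

end SylowConj
section MoreHelpers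

lemma mem_ssupp_iff {S : Set (Equiv.Perm ℕ)} {ω : ℕ} :
    ω ∈ ssupp S ↔ ∃ ρ ∈ S, ω ∈ psupp ρ := by
  simp [ssupp]

lemma restr_inv {lam : Set ℕ} {σ : Equiv.Perm ℕ} (hσ : Pres lam σ) :
    restr lam σ⁻¹ = (restr lam σ)⁻¹ := by
  have h : restr lam σ⁻¹ * restr lam σ = 1 := by
    rw [← restr_mul hσ.inv hσ, inv_mul_cancel, restr_one]
  exact eq_inv_of_mul_eq_one_left h

/-- The image of a subgroup preserving `lam` under restriction to `lam`. -/
def restrSub (lam : Set ℕ) (Q : Subgroup (Equiv.Perm ℕ)) (h : ∀ u ∈ Q, Pres lam u) :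
    Subgroup (Equiv.Perm ℕ) where
  carrier := restr lam '' Q
  one_mem' := ⟨1, Q.one_mem, restr_one lam⟩
  mul_mem' := by
    rintro a b ⟨u, hu, rfl⟩ ⟨v, hv, rfl⟩
    exact ⟨u * v, Q.mul_mem hu hv, restr_mul (h u hu) (h v hv)⟩
  inv_mem' := by
    rintro a ⟨u, hu, rfl⟩
    exact ⟨u⁻¹, Q.inv_mem hu, restr_inv (h u hu)⟩

lemma mem_restrSub {lam : Set ℕ} {Q : Subgroup (Equiv.Perm ℕ)} {h} {x : Equiv.Perm ℕ} :
    x ∈ restrSub lam Q h ↔ ∃ u ∈ Q, restr lam u = x := Iff.rfl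

lemma commute_restr_left {lam : Set ℕ} {u ρ : Equiv.Perm ℕ} (h : Commute u ρ)
    (hu : Pres lam u) (hρ : Pres lam ρ) : Commute (restr lam u) ρ := by
  apply Equiv.ext
  intro ω
  show restr lam u (ρ ω) = ρ (restr lam u ω)
  by_cases hω : ω ∈ lam
  · rw [restr_apply_of_mem hu ((hρ ω).mp hω), restr_apply_of_mem hu hω]
    have := congrFun (congrArg (fun f : Equiv.Perm ℕ => (f : ℕ → ℕ)) h.eq) ω
    exact this
  · rw [restr_apply_of_not_mem _ ((Iff.not (hρ ω)).mp hω), restr_apply_of_not_mem _ hω]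

lemma commute_restr_both {lam : Set ℕ} {u ρ : Equiv.Perm ℕ} (h : Commute u ρ)
    (hu : Pres lam u) (hρ : Pres lam ρ) : Commute (restr lam u) (restr lam ρ) := by
  have h1 : Commute (restr lam u) ρ := commute_restr_left h hu hρ
  exact (commute_restr_left h1.symm hρ Pres.restr).symm

lemma Pres.listProd {lam : Set ℕ} {l : List (Equiv.Perm ℕ)}
    (h : ∀ g ∈ l, Pres lam g) : Pres lam l.prod := by
  induction l with
  | nil => exact Pres.one lam
  | cons g t ih =>
    rw [List.prod_cons]
    exact (h g (List.mem_cons_self)).mul (ih fun k hk => h k (List.mem_cons_of_mem g hk))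

lemma ofFn_prod_single {G : Type*} [Monoid G] {s : ℕ} (i : Fin s) (g : G) :
    (List.ofFn fun j => if j = i then g else 1).prod = g := by
  induction s with
  | zero => exact absurd i.2 (Nat.not_lt_zero _)
  | succ s ih =>
    rw [List.ofFn_succ, List.prod_cons]
    rcases Fin.eq_zero_or_eq_succ i with hi | ⟨k, hi⟩
    · subst hi
      simp only [if_pos rfl]
      have : (List.ofFn fun j : Fin s => if j.succ = (0 : Fin (s+1)) then g else 1).prod = 1 := by
        have he : (fun j : Fin s => if j.succ = (0 : Fin (s+1)) then g else 1) =
            fun _ : Fin s => (1 : G) := by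
          funext j
          rw [if_neg (Fin.succ_ne_zero j)]
        rw [he]
        exact ofFn_prod_one_monoid
      rw [this, mul_one]
      simp
    · subst hi
      have h0 : ((0 : Fin (s+1)) = k.succ) = False := by
        simp [(Fin.succ_ne_zero k).symm]
      rw [if_neg (by simp [(Fin.succ_ne_zero k).symm] : ¬((0 : Fin (s+1)) = k.succ)), one_mul]
      have he : (fun j : Fin s => if j.succ = k.succ then g else 1) =
          fun j : Fin s => if j = k then g else 1 := by
        funext j
        by_cases hj : j = k
        · subst hj; simp
        · rw [if_neg (fun hc => hj (Fin.succ_injective _ hc)), if_neg hj]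
      rw [he, ih k]

lemma pow_p_eq_one_mono {G : Type*} [Monoid G] {g : G} {p k K : ℕ} (h : g ^ p ^ k = 1)
    (hkK : k ≤ K) : g ^ p ^ K = 1 := by
  have : p ^ K = p ^ k * p ^ (K - k) := by
    rw [← pow_add, Nat.add_sub_cancel' hkK]
  rw [this, pow_mul, h, one_pow]

end MoreHelpers

/-- Let `X ∈ 𝓢^q` be exact and closed, and let `λ₁, …, λ_s` be the orbits on
`supp X` of the subgroup `Q̃_X = ⟨Q_X, X⟩` of `G_X`. Then
(1) `X = X₁ * X₂ * ⋯ * X_s` where `Xᵢ ⊆ Sym(λᵢ)` has support `λᵢ` and each `Xᵢ`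
is exact and closed; and (2) `Q_X = Q₁ × Q₂ × ⋯ × Q_s` where `Qᵢ` is a Sylow
`p`-subgroup of `S_{Xᵢ}`. -/
theorem stmt_15 (p q : ℕ) (hp : p.Prime) (hq : 2 ≤ q)
    (X : Set (Equiv.Perm ℕ)) (hX : memS q X)
    (hexact : IsExactSet p X) (hclosed : IsClosedSet p X)
    (Q : Subgroup (Equiv.Perm ℕ)) (hQ : IsSylowOf p Q (SX X))
    (s : ℕ) (lam : Fin s → Set ℕ)
    (hdisj : ∀ i j, i ≠ j → Disjoint (lam i) (lam j))
    (hcover : (⋃ i, lam i) = ssupp X)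
    (horb : ∀ i, ∃ a ∈ ssupp X,
      lam i = {b | ∃ g ∈ Q ⊔ Subgroup.closure X, g a = b}) :
    ∃ Xs : Fin s → Set (Equiv.Perm ℕ),
      (∀ i, memS q (Xs i)) ∧
      (∀ i, ssupp (Xs i) = lam i) ∧
      (∀ i, Xs i ⊆ (symOn (lam i) : Set (Equiv.Perm ℕ))) ∧
      X = (List.ofFn Xs).prod ∧
      (∀ i, IsExactSet p (Xs i) ∧ IsClosedSet p (Xs i)) ∧
      ∃ Qs : Fin s → Subgroup (Equiv.Perm ℕ),
        (∀ i, IsSylowOf p (Qs i) (SX (Xs i))) ∧ Q = ⨆ i, Qs i := by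
  classical
  set α := ssupp X with hα
  have hq0 : q ≠ 0 := by omega
  have hαfin : α.Finite := Set.Finite.biUnion hX.1.1 (fun ρ hρ => hX.1.2.2.2 ρ hρ)
  have hXsupp : ∀ ρ ∈ X, psupp ρ = α := hX.2.1
  have hXorb : ∀ ρ ∈ X, ∀ ω ∈ α, (orbitOf ρ ω).ncard = q := by
    intro ρ hρ ω hω
    have := hX.2.2 ρ hρ ω (by rw [hXsupp ρ hρ]; exact hω)
    exact this
  have hXsym : ∀ ρ ∈ X, ρ ∈ symOn α := fun ρ hρ =>
    mem_symOn_of_psupp (le_of_eq (hXsupp ρ hρ))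
  have hSXle : SX X ≤ symOn α := inf_le_left
  have hQle : Q ≤ SX X := hQ.1
  have hQsym : ∀ u ∈ Q, u ∈ symOn α := fun u hu => hSXle (hQle hu)
  have hQcent : ∀ u ∈ Q, ∀ ρ ∈ X, Commute u ρ := by
    intro u hu ρ hρ
    have h2 : u ∈ Subgroup.centralizer X := (Subgroup.mem_inf.mp (hQle hu)).2
    exact (Subgroup.mem_centralizer_iff.mp h2 ρ hρ).symm
  set H : Subgroup (Equiv.Perm ℕ) := Q ⊔ Subgroup.closure X with hH
  have hHsym : H ≤ symOn α := by
    apply sup_le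
    · intro u hu; exact hQsym u hu
    · rw [Subgroup.closure_le]
      intro ρ hρ; exact hXsym ρ hρ
  have hlam_sub : ∀ i, lam i ⊆ α := by
    intro i
    obtain ⟨a, ha, hlam⟩ := horb i
    rw [hlam]
    rintro b ⟨g, hg, rfl⟩
    exact (symOn_preserves (hHsym hg) a).mp ha
  have hlam_inv : ∀ i, ∀ g ∈ H, Pres (lam i) g := by
    intro i g hg
    obtain ⟨a, ha, hlam⟩ := horb i
    intro ω
    rw [hlam]
    constructor
    · rintro ⟨h, hh, rfl⟩
      exact ⟨g * h, H.mul_mem hg hh, rfl⟩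
    · rintro ⟨h, hh, hhω⟩
      refine ⟨g⁻¹ * h, H.mul_mem (H.inv_mem hg) hh, ?_⟩
      show g⁻¹ (h a) = ω
      rw [hhω, Equiv.Perm.inv_apply_self]
  have hPresX : ∀ ρ ∈ X, ∀ i, Pres (lam i) ρ := fun ρ hρ i =>
    hlam_inv i ρ ((le_sup_right : Subgroup.closure X ≤ H) (Subgroup.subset_closure hρ))
  have hPresQ : ∀ u ∈ Q, ∀ i, Pres (lam i) u := fun u hu i =>
    hlam_inv i u ((le_sup_left : Q ≤ H) hu)
  have hmemlam : ∀ ω ∈ α, ∃ j, ω ∈ lam j := by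
    intro ω hω
    rw [← hcover] at hω
    exact Set.mem_iUnion.mp hω
  have ha_mem : ∀ i, (lam i).Nonempty := by
    intro i
    obtain ⟨a, ha, hlam⟩ := horb i
    exact ⟨a, by rw [hlam]; exact ⟨1, H.one_mem, rfl⟩⟩
  -- decomposition of a permutation along the lam's
  have hdecomp : ∀ σ : Equiv.Perm ℕ, psupp σ ⊆ α → (∀ i, Pres (lam i) σ) →
      σ = (List.ofFn fun i => restr (lam i) σ).prod := by
    intro σ hσs hσP
    apply Equiv.ext
    intro ω
    by_cases hω : ω ∈ α
    · obtain ⟨j, hj⟩ := hmemlam ω hω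
      rw [ofFn_prod_apply _ j ω ?_]
      · rw [restr_apply_of_mem (hσP j) hj]
      · intro i hij
        have h1 : ω ∉ lam i := Set.disjoint_left.mp (hdisj j i (Ne.symm hij)) hj
        have h2 : restr (lam j) σ ω = σ ω := restr_apply_of_mem (hσP j) hj
        have h3 : σ ω ∈ lam j := (hσP j ω).mp hj
        have h4 : σ ω ∉ lam i := Set.disjoint_left.mp (hdisj j i (Ne.symm hij)) h3
        rw [h2]
        exact ⟨restr_apply_of_not_mem _ h1, restr_apply_of_not_mem _ h4⟩
    · rw [list_prod_apply_of_fixed]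
      · by_contra hc
        exact hω (hσs hc)
      · intro g hg
        rw [List.mem_ofFn] at hg
        obtain ⟨i, rfl⟩ := hg
        exact restr_apply_of_not_mem _ (fun hc => hω (hlam_sub i hc))
  set Xs : Fin s → Set (Equiv.Perm ℕ) := fun i => restr (lam i) '' X with hXs
  have hXne := hX.1.2.1
  obtain ⟨ρ₀, hρ₀⟩ := hXne
  have hpsupp_restr_X : ∀ ρ ∈ X, ∀ i, psupp (restr (lam i) ρ) = lam i := by
    intro ρ hρ i
    rw [psupp_restr (hPresX ρ hρ i), hXsupp ρ hρ]
    exact Set.inter_eq_self_of_subset_right (hlam_sub i)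
  have hssuppXs : ∀ i, ssupp (Xs i) = lam i := by
    intro i
    apply Set.eq_of_subset_of_subset
    · intro ω hω
      obtain ⟨x, ⟨ρ, hρ, rfl⟩, hωx⟩ := mem_ssupp_iff.mp hω
      rw [hpsupp_restr_X ρ hρ i] at hωx
      exact hωx
    · intro ω hω
      exact mem_ssupp_iff.mpr ⟨restr (lam i) ρ₀, ⟨ρ₀, hρ₀, rfl⟩,
        by rw [hpsupp_restr_X ρ₀ hρ₀ i]; exact hω⟩
  have hXsP : ∀ i, Xs i ⊆ (symOn (lam i) : Set (Equiv.Perm ℕ)) := by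
    rintro i x ⟨ρ, hρ, rfl⟩
    exact restr_mem_symOn ρ
  -- elements of Xs j preserve every lam i
  have hXsPres : ∀ i j, ∀ x ∈ Xs j, Pres (lam i) x := by
    intro i j x hx
    by_cases hij : i = j
    · subst hij
      exact Pres.of_symOn (hXsP i hx)
    · intro ω
      have hxOn : x ∈ symOn (lam j) := hXsP j hx
      constructor
      · intro hω
        have : ω ∉ lam j := Set.disjoint_left.mp (hdisj i j hij) hω
        rw [hxOn ω this]
        exact hω
      · intro hω
        by_cases hωj : ω ∈ lam j
        · have : x ω ∈ lam j := (symOn_preserves hxOn ω).mp hωj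
          exact absurd this (Set.disjoint_left.mp (hdisj i j hij) hω)
        · rwa [hxOn ω hωj] at hω
  -- the mixed product lemma
  have hmix : ∀ x : Fin s → Equiv.Perm ℕ, (∀ i, x i ∈ Xs i) →
      (List.ofFn x).prod ∈ X := by
    intro x hx
    set σ := (List.ofFn x).prod with hσ
    have hxsupp : ∀ i, psupp (x i) ⊆ lam i := by
      intro i
      exact psupp_subset_of_mem_symOn (hXsP i (hx i))
    have heval : ∀ j, ∀ ω ∈ lam j, σ ω = x j ω := by
      intro j ω hω
      rw [hσ, ofFn_prod_apply x j ω]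
      intro i hij
      have h1 : ω ∉ lam i := Set.disjoint_left.mp (hdisj j i (Ne.symm hij)) hω
      have h3 : x j ω ∈ lam j := (hXsPres j j _ (hx j) ω).mp hω
      have h4 : x j ω ∉ lam i := Set.disjoint_left.mp (hdisj j i (Ne.symm hij)) h3
      constructor
      · by_contra hc
        exact h1 (hxsupp i hc)
      · by_contra hc
        exact h4 (hxsupp i hc)
    have hfix : ∀ ω, ω ∉ α → σ ω = ω := by
      intro ω hω
      rw [hσ]
      apply list_prod_apply_of_fixed
      intro g hg
      rw [List.mem_ofFn] at hg
      obtain ⟨i, rfl⟩ := hg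
      by_contra hc
      exact hω (hlam_sub i (hxsupp i hc))
    have hσsupp : psupp σ = α := by
      apply Set.eq_of_subset_of_subset
      · intro ω hω
        by_contra hc
        exact hω (hfix ω hc)
      · intro ω hω
        obtain ⟨j, hj⟩ := hmemlam ω hω
        obtain ⟨ρ, hρ, hρx⟩ := hx j
        show σ ω ≠ ω
        rw [heval j ω hj, ← hρx, restr_apply_of_mem (hPresX ρ hρ j) hj]
        have : ω ∈ psupp ρ := by rw [hXsupp ρ hρ]; exact hω
        exact this
    have hσPres : ∀ i, Pres (lam i) σ := by
      intro i
      rw [hσ]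
      apply Pres.listProd
      intro g hg
      rw [List.mem_ofFn] at hg
      obtain ⟨j, rfl⟩ := hg
      exact hXsPres i j _ (hx j)
    have hσorb : ∀ ω ∈ α, (orbitOf σ ω).ncard = q := by
      intro ω hω
      obtain ⟨j, hj⟩ := hmemlam ω hω
      obtain ⟨ρ, hρ, hρx⟩ := hx j
      have hagree : ∀ v ∈ lam j, σ v = ρ v := by
        intro v hv
        rw [heval j v hv, ← hρx, restr_apply_of_mem (hPresX ρ hρ j) hv]
      rw [orbitOf_eq_of_agree (hσPres j) (hPresX ρ hρ j) hagree hj]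
      exact hXorb ρ hρ ω hω
    -- conjugate to ρ₀
    obtain ⟨g, hg, hgρ⟩ := conj_qcycles hq0 hαfin (hXsupp ρ₀ hρ₀) hσsupp
      (hXorb ρ₀ hρ₀) hσorb
    have hσΞ : σ ∈ Xi X := by
      apply Set.mem_biUnion hg
      exact ⟨ρ₀, hρ₀, hgρ⟩
    have hσC : σ ∈ (Subgroup.centralizer (Q : Set (Equiv.Perm ℕ)) :
        Set (Equiv.Perm ℕ)) := by
      rw [SetLike.mem_coe, Subgroup.mem_centralizer_iff]
      intro u hu
      have hcomm : ∀ i, Commute (x i) u := by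
        intro i
        obtain ⟨ρ, hρ, hρx⟩ := hx i
        rw [← hρx]
        exact commute_restr_left (hQcent u hu ρ hρ).symm (hPresX ρ hρ i) (hPresQ u hu i)
      have : Commute σ u := by
        rw [hσ]
        apply Commute.list_prod_left
        intro y hy
        rw [List.mem_ofFn] at hy
        obtain ⟨i, rfl⟩ := hy
        exact hcomm i
      exact this.symm.eq
    have := hclosed Q hQ
    rw [← this]
    exact ⟨hσC, hσΞ⟩
  have hXprod : X = (List.ofFn Xs).prod := by
    apply Set.eq_of_subset_of_subset
    · intro ρ hρ
      have hd := hdecomp ρ (le_of_eq (hXsupp ρ hρ)) (hPresX ρ hρ)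
      rw [hd]
      exact list_prod_mem_setProd Xs _ (fun i => ⟨ρ, hρ, rfl⟩)
    · intro z hz
      obtain ⟨x, hx, rfl⟩ := mem_setProd_list Xs z hz
      exact hmix x hx
  -- membership in 𝓢^q for the factors
  have hXsorb : ∀ i, ∀ x ∈ Xs i, ∀ ω ∈ lam i, (orbitOf x ω).ncard = q := by
    rintro i x ⟨ρ, hρ, rfl⟩ ω hω
    have hagree : ∀ v ∈ lam i, restr (lam i) ρ v = ρ v := fun v hv =>
      restr_apply_of_mem (hPresX ρ hρ i) hv
    rw [orbitOf_eq_of_agree Pres.restr (hPresX ρ hρ i) hagree hω]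
    exact hXorb ρ hρ ω (hlam_sub i hω)
  have hXsmemS : ∀ i, memS q (Xs i) := by
    intro i
    refine ⟨⟨hX.1.1.image _, ⟨restr (lam i) ρ₀, ⟨ρ₀, hρ₀, rfl⟩⟩, ?_, ?_⟩, ?_, ?_⟩
    · intro hc
      have h1 : restr (lam i) ρ₀ ∈ Xs i := ⟨ρ₀, hρ₀, rfl⟩
      rw [hc] at h1
      have h2 : psupp (restr (lam i) ρ₀) = lam i := hpsupp_restr_X ρ₀ hρ₀ i
      rw [Set.mem_singleton_iff.mp h1] at h2
      obtain ⟨a, ha⟩ := ha_mem i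
      rw [← h2] at ha
      rw [psupp_one] at ha
      exact ha
    · rintro x ⟨ρ, hρ, rfl⟩
      rw [hpsupp_restr_X ρ hρ i]
      exact hαfin.subset (hlam_sub i)
    · rintro x ⟨ρ, hρ, rfl⟩
      rw [hpsupp_restr_X ρ hρ i, hssuppXs i]
    · intro x hx ω hω
      obtain ⟨ρ, hρ, rfl⟩ := hx
      rw [hpsupp_restr_X ρ hρ i] at hω
      exact hXsorb i _ ⟨ρ, hρ, rfl⟩ ω hω
  -- the Sylow factors
  set Qs : Fin s → Subgroup (Equiv.Perm ℕ) :=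
    fun i => restrSub (lam i) Q (fun u hu => hPresQ u hu i) with hQsdef
  have hQsmem : ∀ i (x : Equiv.Perm ℕ), x ∈ Qs i ↔ ∃ u ∈ Q, restr (lam i) u = x :=
    fun i x => Iff.rfl
  have hQs_supp : ∀ i, ∀ x ∈ Qs i, psupp x ⊆ lam i := by
    rintro i x ⟨u, hu, rfl⟩
    exact psupp_subset_of_mem_symOn (restr_mem_symOn u)
  have hQs_p : ∀ i, IsPGroup p (Qs i) := by
    intro i
    intro g
    obtain ⟨u, hu, hgu⟩ := g.2
    obtain ⟨k, hk⟩ := hQ.2.1 ⟨u, hu⟩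
    have hk' : u ^ p ^ k = 1 := by
      have := Subtype.ext_iff.mp hk
      simpa using this
    refine ⟨k, ?_⟩
    apply Subtype.ext
    have : (g : Equiv.Perm ℕ) ^ p ^ k = 1 := by
      rw [← hgu, ← restr_pow (hPresQ u hu i), hk', restr_one]
    simpa using this
  have hFcomm : ∀ i j, i ≠ j → ∀ a ∈ Qs i, ∀ b ∈ Qs j, Commute a b := by
    intro i j hij a ha b hb
    exact disjoint_psupp_commute (Set.disjoint_of_subset (hQs_supp i a ha)
      (hQs_supp j b hb) (hdisj i j hij))
  -- Qs i centralizes X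
  have hQs_centX : ∀ i, ∀ x ∈ Qs i, ∀ ρ ∈ X, Commute x ρ := by
    rintro i x ⟨u, hu, rfl⟩ ρ hρ
    exact commute_restr_left (hQcent u hu ρ hρ) (hPresQ u hu i) (hPresX ρ hρ i)
  have hQs_le_SXX : ∀ i, Qs i ≤ SX X := by
    intro i
    rintro x hx
    rw [SX, Subgroup.mem_inf]
    constructor
    · obtain ⟨u, hu, rfl⟩ := hx
      exact symOn_mono (hlam_sub i) (restr_mem_symOn u)
    · rw [Subgroup.mem_centralizer_iff]
      intro ρ hρ
      exact (hQs_centX i x hx ρ hρ).symm.eq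
  set T : Subgroup (Equiv.Perm ℕ) := famProd Qs hFcomm with hT
  have hT_le : T ≤ SX X := by
    rintro t ⟨a, ha, rfl⟩
    apply Subgroup.list_prod_mem
    intro x hx
    rw [List.mem_ofFn] at hx
    obtain ⟨i, rfl⟩ := hx
    exact hQs_le_SXX i (ha i)
  have hfam_p : ∀ (F : Fin s → Subgroup (Equiv.Perm ℕ)) (hc), (∀ i, IsPGroup p (F i)) →
      IsPGroup p (famProd F hc) := by
    intro F hc hFp g
    obtain ⟨a, ha, hgval⟩ := g.2
    have hks : ∀ i, ∃ k, (a i) ^ p ^ k = 1 := by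
      intro i
      obtain ⟨k, hk⟩ := hFp i ⟨a i, ha i⟩
      exact ⟨k, by simpa using Subtype.ext_iff.mp hk⟩
    choose ks hks' using hks
    set K := Finset.univ.sup ks with hK
    refine ⟨K, ?_⟩
    apply Subtype.ext
    have hval : (g : Equiv.Perm ℕ) ^ p ^ K = 1 := by
      rw [hgval, ofFn_prod_pow a (fun i j hij => hc i j hij _ (ha i) _ (ha j))]
      have : (fun i => a i ^ p ^ K) = fun _ : Fin s => (1 : Equiv.Perm ℕ) := by
        funext i
        exact pow_p_eq_one_mono (hks' i) (Finset.le_sup (Finset.mem_univ i))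
      rw [this]
      exact ofFn_prod_one_monoid
    simpa using hval
  have hT_p : IsPGroup p T := hfam_p Qs hFcomm hQs_p
  have hQ_decomp : ∀ u ∈ Q, u = (List.ofFn fun i => restr (lam i) u).prod := by
    intro u hu
    exact hdecomp u (psupp_subset_of_mem_symOn (hQsym u hu)) (fun i => hPresQ u hu i)
  have hQ_le_T : Q ≤ T := by
    intro u hu
    exact ⟨fun i => restr (lam i) u, fun i => ⟨u, hu, rfl⟩, hQ_decomp u hu⟩
  have hTQ : T = Q := hQ.2.2 T hT_le hT_p hQ_le_T
  have hQs_le_Q : ∀ i, Qs i ≤ Q := by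
    intro i x hx
    rw [← hTQ]
    refine ⟨fun j => if j = i then x else 1, ?_, ?_⟩
    · intro j
      by_cases hj : j = i
      · subst hj
        show (if j = j then x else 1) ∈ Qs j
        rw [if_pos rfl]; exact hx
      · show (if j = i then x else 1) ∈ Qs j
        rw [if_neg hj]; exact (Qs j).one_mem
    · exact (ofFn_prod_single i x).symm
  have hQsup : Q = ⨆ i, Qs i := by
    apply le_antisymm
    · intro u hu
      rw [hQ_decomp u hu]
      apply Subgroup.list_prod_mem
      intro x hx
      rw [List.mem_ofFn] at hx
      obtain ⟨i, rfl⟩ := hx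
      exact (le_iSup Qs i : Qs i ≤ _) ⟨u, hu, rfl⟩
    · exact iSup_le hQs_le_Q
  -- Qs i ≤ SX (Xs i)
  have hQs_centXs : ∀ i, ∀ x ∈ Qs i, ∀ y ∈ Xs i, Commute x y := by
    rintro i x ⟨u, hu, rfl⟩ y ⟨ρ, hρ, rfl⟩
    exact commute_restr_both (hQcent u hu ρ hρ) (hPresQ u hu i) (hPresX ρ hρ i)
  have hQs_le_SXs : ∀ i, Qs i ≤ SX (Xs i) := by
    intro i x hx
    rw [SX, Subgroup.mem_inf]
    constructor
    · rw [hssuppXs i]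
      obtain ⟨u, hu, rfl⟩ := hx
      exact restr_mem_symOn u
    · rw [Subgroup.mem_centralizer_iff]
      intro y hy
      exact (hQs_centXs i x hx y hy).symm.eq
  have hSXs_le : ∀ i, SX (Xs i) ≤ symOn (lam i) := by
    intro i
    rw [SX, hssuppXs i]
    exact inf_le_left
  -- maximality of Qs i
  have hQsSyl : ∀ i, IsSylowOf p (Qs i) (SX (Xs i)) := by
    intro i
    refine ⟨hQs_le_SXs i, hQs_p i, ?_⟩
    intro R hRle hRp hQsR
    have hRsym : ∀ r ∈ R, r ∈ symOn (lam i) := fun r hr => hSXs_le i (hRle hr)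
    have hRsupp : ∀ r ∈ R, psupp r ⊆ lam i := fun r hr =>
      psupp_subset_of_mem_symOn (hRsym r hr)
    set F : Fin s → Subgroup (Equiv.Perm ℕ) := fun j => if j = i then R else Qs j with hF
    have hFsupp : ∀ j, ∀ x ∈ F j, psupp x ⊆ lam j := by
      intro j x hx
      by_cases hj : j = i
      · subst hj
        have hFj : F j = R := by simp [hF]
        rw [hFj] at hx; exact hRsupp x hx
      · have hFj : F j = Qs j := by simp [hF, hj]
        rw [hFj] at hx; exact hQs_supp j x hx
    have hFc : ∀ j k, j ≠ k → ∀ a ∈ F j, ∀ b ∈ F k, Commute a b := by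
      intro j k hjk a ha b hb
      exact disjoint_psupp_commute (Set.disjoint_of_subset (hFsupp j a ha)
        (hFsupp k b hb) (hdisj j k hjk))
    have hFp : ∀ j, IsPGroup p (F j) := by
      intro j
      by_cases hj : j = i
      · subst hj
        have hFj : F j = R := by simp [hF]
        rw [hFj]; exact hRp
      · have hFj : F j = Qs j := by simp [hF, hj]
        rw [hFj]; exact hQs_p j
    set T' : Subgroup (Equiv.Perm ℕ) := famProd F hFc with hT'
    -- R centralizes X
    have hR_centX : ∀ r ∈ R, ∀ ρ ∈ X, Commute r ρ := by
      intro r hr ρ hρ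
      have hd := hdecomp ρ (le_of_eq (hXsupp ρ hρ)) (hPresX ρ hρ)
      rw [hd]
      apply Commute.list_prod_right
      intro y hy
      rw [List.mem_ofFn] at hy
      obtain ⟨j, rfl⟩ := hy
      by_cases hj : j = i
      · subst hj
        have := (Subgroup.mem_inf.mp (hRle hr)).2
        exact Subgroup.mem_centralizer_iff.mp this _ ⟨ρ, hρ, rfl⟩ |>.symm
      · exact disjoint_psupp_commute (Set.disjoint_of_subset (hRsupp r hr)
          (psupp_subset_of_mem_symOn (restr_mem_symOn ρ)) (hdisj i j (Ne.symm hj)))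
    have hT'_le : T' ≤ SX X := by
      rintro t ⟨a, ha, rfl⟩
      apply Subgroup.list_prod_mem
      intro x hx
      rw [List.mem_ofFn] at hx
      obtain ⟨j, rfl⟩ := hx
      by_cases hj : j = i
      · subst hj
        have haj := ha j
        have hFj : F j = R := by simp [hF]
        rw [hFj] at haj
        rw [SX, Subgroup.mem_inf]
        refine ⟨symOn_mono (hlam_sub j) (hRsym _ haj), ?_⟩
        rw [Subgroup.mem_centralizer_iff]
        intro ρ hρ
        exact (hR_centX _ haj ρ hρ).symm.eq
      · have haj := ha j
        have hFj : F j = Qs j := by simp [hF, hj]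
        rw [hFj] at haj
        exact hQs_le_SXX j haj
    have hT'_p : IsPGroup p T' := hfam_p F hFc hFp
    have hQ_le_T' : Q ≤ T' := by
      intro u hu
      refine ⟨fun j => restr (lam j) u, ?_, hQ_decomp u hu⟩
      intro j
      by_cases hj : j = i
      · subst hj
        have hFj : F j = R := by simp [hF]
        rw [hFj]
        exact hQsR ⟨u, hu, rfl⟩
      · have hFj : F j = Qs j := by simp [hF, hj]
        rw [hFj]
        exact ⟨u, hu, rfl⟩
    have hT'Q : T' = Q := hQ.2.2 T' hT'_le hT'_p hQ_le_T'
    -- R ≤ Qs i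
    apply le_antisymm _ hQsR
    intro r hr
    have hrT' : r ∈ T' := by
      refine ⟨fun j => if j = i then r else 1, ?_, (ofFn_prod_single i r).symm⟩
      intro j
      by_cases hj : j = i
      · subst hj
        have hFj : F j = R := by simp [hF]
        show (if j = j then r else 1) ∈ F j
        rw [if_pos rfl, hFj]; exact hr
      · have hFj : F j = Qs j := by simp [hF, hj]
        show (if j = i then r else 1) ∈ F j
        rw [if_neg hj, hFj]; exact (Qs j).one_mem
    rw [hT'Q] at hrT'
    exact ⟨r, hrT', restr_eq_self (hRsym r hr)⟩
  -- general preservation by permutations supported on one block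
  have hsymPres : ∀ j i : Fin s, ∀ x : Equiv.Perm ℕ, x ∈ symOn (lam j) →
      Pres (lam i) x := by
    intro j i x hxOn
    by_cases hij : i = j
    · subst hij
      exact Pres.of_symOn hxOn
    · intro ω
      constructor
      · intro hω
        have : ω ∉ lam j := Set.disjoint_left.mp (hdisj i j hij) hω
        rw [hxOn ω this]
        exact hω
      · intro hω
        by_cases hωj : ω ∈ lam j
        · have : x ω ∈ lam j := (symOn_preserves hxOn ω).mp hωj
          exact absurd this (Set.disjoint_left.mp (hdisj i j hij) hω)
        · rwa [hxOn ω hωj] at hω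
  -- the master mixed-product lemma
  have hmix0 : ∀ x : Fin s → Equiv.Perm ℕ,
      (∀ j, psupp (x j) = lam j) →
      (∀ j, ∀ ω ∈ lam j, (orbitOf (x j) ω).ncard = q) →
      (∀ j, ∀ u ∈ Q, Commute (x j) u) →
      (List.ofFn x).prod ∈ X ∧ ∀ j, restr (lam j) (List.ofFn x).prod = x j := by
    intro x hxsupp' hxorb hxcomm
    set σ := (List.ofFn x).prod with hσ
    have hxsupp : ∀ j, psupp (x j) ⊆ lam j := fun j => le_of_eq (hxsupp' j)
    have hxsym : ∀ j, x j ∈ symOn (lam j) := fun j => mem_symOn_of_psupp (hxsupp j)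
    have hxPres : ∀ i j, Pres (lam i) (x j) := fun i j => hsymPres j i _ (hxsym j)
    have heval : ∀ j, ∀ ω ∈ lam j, σ ω = x j ω := by
      intro j ω hω
      rw [hσ, ofFn_prod_apply x j ω]
      intro i hij
      have h1 : ω ∉ lam i := Set.disjoint_left.mp (hdisj j i (Ne.symm hij)) hω
      have h3 : x j ω ∈ lam j := (hxPres j j ω).mp hω
      have h4 : x j ω ∉ lam i := Set.disjoint_left.mp (hdisj j i (Ne.symm hij)) h3
      constructor
      · by_contra hc
        exact h1 (hxsupp i hc)
      · by_contra hc
        exact h4 (hxsupp i hc)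
    have hfix : ∀ ω, ω ∉ α → σ ω = ω := by
      intro ω hω
      rw [hσ]
      apply list_prod_apply_of_fixed
      intro g hg
      rw [List.mem_ofFn] at hg
      obtain ⟨i, rfl⟩ := hg
      by_contra hc
      exact hω (hlam_sub i (hxsupp i hc))
    have hσsupp : psupp σ = α := by
      apply Set.eq_of_subset_of_subset
      · intro ω hω
        by_contra hc
        exact hω (hfix ω hc)
      · intro ω hω
        obtain ⟨j, hj⟩ := hmemlam ω hω
        show σ ω ≠ ω
        rw [heval j ω hj]
        have : ω ∈ psupp (x j) := by rw [hxsupp' j]; exact hj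
        exact this
    have hσPres : ∀ i, Pres (lam i) σ := by
      intro i
      rw [hσ]
      apply Pres.listProd
      intro g hg
      rw [List.mem_ofFn] at hg
      obtain ⟨j, rfl⟩ := hg
      exact hxPres i j
    have hσorb : ∀ ω ∈ α, (orbitOf σ ω).ncard = q := by
      intro ω hω
      obtain ⟨j, hj⟩ := hmemlam ω hω
      have hagree : ∀ v ∈ lam j, σ v = x j v := fun v hv => heval j v hv
      rw [orbitOf_eq_of_agree (hσPres j) (hxPres j j) hagree hj]
      exact hxorb j ω hj
    obtain ⟨g, hg, hgρ⟩ := conj_qcycles hq0 hαfin (hXsupp ρ₀ hρ₀) hσsupp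
      (hXorb ρ₀ hρ₀) hσorb
    have hσΞ : σ ∈ Xi X := Set.mem_biUnion hg ⟨ρ₀, hρ₀, hgρ⟩
    have hσC : σ ∈ (Subgroup.centralizer (Q : Set (Equiv.Perm ℕ)) :
        Set (Equiv.Perm ℕ)) := by
      rw [SetLike.mem_coe, Subgroup.mem_centralizer_iff]
      intro u hu
      have : Commute σ u := by
        rw [hσ]
        apply Commute.list_prod_left
        intro y hy
        rw [List.mem_ofFn] at hy
        obtain ⟨i, rfl⟩ := hy
        exact hxcomm i u hu
      exact this.symm.eq
    have hσX : σ ∈ X := by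
      have := hclosed Q hQ
      rw [← this]
      exact ⟨hσC, hσΞ⟩
    refine ⟨hσX, ?_⟩
    intro j
    apply Equiv.ext
    intro ω
    by_cases hω : ω ∈ lam j
    · rw [restr_apply_of_mem (hσPres j) hω]
      exact heval j ω hω
    · rw [restr_apply_of_not_mem _ hω]
      by_contra hc
      exact hω (hxsupp j (Ne.symm hc))
  -- finiteness and conjugacy data for the factors
  have hSXsfin : ∀ i, Finite ↥(SX (Xs i)) := fun i =>
    subgroup_finite_of_le (symOn_finite (hαfin.subset (hlam_sub i))) (hSXs_le i)
  have hssuppQs : ∀ i, ssupp ((Qs i : Set (Equiv.Perm ℕ))) = lam i := by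
    intro i
    apply Set.eq_of_subset_of_subset
    · intro ω hω
      obtain ⟨y, hy, hωy⟩ := mem_ssupp_iff.mp hω
      exact hQs_supp i y hy hωy
    · intro ω hω
      have hωα : ω ∈ α := hlam_sub i hω
      have hωQ : ω ∈ ssupp ((Q : Set (Equiv.Perm ℕ))) := by
        rw [hexact Q hQ]
        exact hωα
      obtain ⟨u, hu, hωu⟩ := mem_ssupp_iff.mp hωQ
      refine mem_ssupp_iff.mpr ⟨restr (lam i) u, ⟨u, hu, rfl⟩, ?_⟩
      show restr (lam i) u ω ≠ ω
      rw [restr_apply_of_mem (hPresQ u hu i) hω]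
      exact hωu
  -- exactness of the factors
  have hXsExact : ∀ i, IsExactSet p (Xs i) := by
    intro i Q' hQ'
    obtain ⟨c, hc, hcmem⟩ := isSylowOf_conj hp (hSXsfin i) (hQsSyl i) hQ'
    have hcsym : c ∈ symOn (lam i) := hSXs_le i hc
    rw [hssuppXs i]
    apply Set.eq_of_subset_of_subset
    · intro ω hω
      obtain ⟨y, hy, hωy⟩ := mem_ssupp_iff.mp hω
      have hyQ : c⁻¹ * y * c ∈ Qs i := (hcmem y).mp hy
      have h1 : c⁻¹ ω ∈ psupp (c⁻¹ * y * c) := by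
        rw [psupp_conj]
        show c (c⁻¹ ω) ∈ psupp y
        rw [Equiv.Perm.apply_inv_self]
        exact hωy
      have h2 : c⁻¹ ω ∈ lam i := hQs_supp i _ hyQ h1
      have h3 := (symOn_preserves hcsym (c⁻¹ ω)).mp h2
      rwa [Equiv.Perm.apply_inv_self] at h3
    · intro ω hω
      have h2 : c⁻¹ ω ∈ lam i := (Pres.of_symOn hcsym).inv ω |>.mp hω
      rw [← hssuppQs i] at h2
      obtain ⟨y, hy, hωy⟩ := mem_ssupp_iff.mp h2
      have hxQ' : c * y * c⁻¹ ∈ Q' := by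
        apply (hcmem _).mpr
        have he : c⁻¹ * (c * y * c⁻¹) * c = y := by group
        rw [he]
        exact hy
      refine mem_ssupp_iff.mpr ⟨c * y * c⁻¹, hxQ', ?_⟩
      have he2 : c * y * c⁻¹ = (c⁻¹)⁻¹ * y * c⁻¹ := by group
      rw [he2, psupp_conj]
      exact hωy
  -- closedness of the factors
  have hXsClosed : ∀ i, IsClosedSet p (Xs i) := by
    intro i Q' hQ'
    obtain ⟨c, hc, hcmem⟩ := isSylowOf_conj hp (hSXsfin i) (hQsSyl i) hQ'
    have hcsym : c ∈ symOn (lam i) := hSXs_le i hc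
    have hccent : ∀ y ∈ Xs i, Commute c y := by
      intro y hy
      exact (Subgroup.mem_centralizer_iff.mp (Subgroup.mem_inf.mp hc).2 y hy).symm
    apply Set.eq_of_subset_of_subset
    · rintro σ ⟨hσC, hσΞ⟩
      obtain ⟨g, hg, hσg⟩ := Set.mem_iUnion₂.mp hσΞ
      obtain ⟨xx, hxXs, hσeq⟩ := hσg
      obtain ⟨ρ, hρ, rfl⟩ := hxXs
      have hgsym : g ∈ symOn (lam i) := by
        rw [hssuppXs i] at hg
        exact hg
      set τ : Equiv.Perm ℕ := c⁻¹ * σ * c with hτeq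
      have hσcent : ∀ z ∈ Q', Commute σ z := by
        intro z hz
        exact (Subgroup.mem_centralizer_iff.mp hσC z hz).symm
      have hτcent : ∀ y ∈ Qs i, Commute τ y := by
        intro y hy
        have hzQ' : c * y * c⁻¹ ∈ Q' := by
          apply (hcmem _).mpr
          have he : c⁻¹ * (c * y * c⁻¹) * c = y := by group
          rw [he]
          exact hy
        have h1 : Commute σ (c * y * c⁻¹) := hσcent _ hzQ'
        show τ * y = y * τ
        calc τ * y = c⁻¹ * (σ * (c * y * c⁻¹)) * c := by
              rw [hτeq]; group
          _ = c⁻¹ * ((c * y * c⁻¹) * σ) * c := by rw [h1.eq]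
          _ = y * τ := by rw [hτeq]; group
      have hτconj : τ = (g * c)⁻¹ * restr (lam i) ρ * (g * c) := by
        rw [hτeq, ← hσeq]
        show c⁻¹ * (g⁻¹ * restr (lam i) ρ * g) * c = _
        group
      have hgcsym : g * c ∈ symOn (lam i) := (symOn (lam i)).mul_mem hgsym hcsym
      have hτsupp : psupp τ = lam i := by
        rw [hτconj, psupp_conj, hpsupp_restr_X ρ hρ i]
        apply Set.eq_of_subset_of_subset
        · intro ω hω
          exact (symOn_preserves hgcsym ω).mpr hω
        · intro ω hω
          exact (symOn_preserves hgcsym ω).mp hω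
      have hτorb : ∀ ω ∈ lam i, (orbitOf τ ω).ncard = q := by
        intro ω hω
        rw [hτconj, orbitOf_conj]
        rw [Set.ncard_image_of_injective _ (Equiv.injective _)]
        apply hXsorb i _ ⟨ρ, hρ, rfl⟩
        exact (symOn_preserves hgcsym ω).mp hω
      -- build the global element
      set a : Fin s → Equiv.Perm ℕ := fun j => if j = i then τ else restr (lam j) ρ
        with ha
      have ha_supp : ∀ j, psupp (a j) = lam j := by
        intro j
        by_cases hj : j = i
        · subst hj
          have : a j = τ := by rw [ha]; simp
          rw [this, hτsupp]
        · have : a j = restr (lam j) ρ := by rw [ha]; simp [hj]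
          rw [this, hpsupp_restr_X ρ hρ j]
      have ha_orb : ∀ j, ∀ ω ∈ lam j, (orbitOf (a j) ω).ncard = q := by
        intro j ω hω
        by_cases hj : j = i
        · subst hj
          have : a j = τ := by rw [ha]; simp
          rw [this]
          exact hτorb ω hω
        · have : a j = restr (lam j) ρ := by rw [ha]; simp [hj]
          rw [this]
          exact hXsorb j _ ⟨ρ, hρ, rfl⟩ ω hω
      have ha_comm : ∀ j, ∀ u ∈ Q, Commute (a j) u := by
        intro j u hu
        by_cases hj : j = i
        · subst hj
          have haj : a j = τ := by rw [ha]; simp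
          rw [haj]
          rw [hQ_decomp u hu]
          apply Commute.list_prod_right
          intro y hy
          rw [List.mem_ofFn] at hy
          obtain ⟨k, rfl⟩ := hy
          by_cases hk : k = j
          · subst hk
            exact hτcent _ ⟨u, hu, rfl⟩
          · apply disjoint_psupp_commute
            refine Set.disjoint_of_subset (le_of_eq hτsupp) ?_ (hdisj j k (Ne.symm hk))
            exact psupp_subset_of_mem_symOn (restr_mem_symOn u)
        · have haj : a j = restr (lam j) ρ := by rw [ha]; simp [hj]
          rw [haj]
          exact commute_restr_left (hQcent u hu ρ hρ).symm (hPresX ρ hρ j) (hPresQ u hu j)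
      obtain ⟨hθX, hθres⟩ := hmix0 a ha_supp ha_orb ha_comm
      have hτXs : τ ∈ Xs i := by
        refine ⟨(List.ofFn a).prod, hθX, ?_⟩
        rw [hθres i, ha]
        simp
      have hcτ : Commute c τ := hccent τ hτXs
      have hστ : σ = τ := by
        have h1 : σ = c * τ * c⁻¹ := by rw [hτeq]; group
        rw [h1, hcτ.eq]
        group
      rw [hστ]
      exact hτXs
    · intro σ hσ
      constructor
      · rw [SetLike.mem_coe, Subgroup.mem_centralizer_iff]
        intro z hz
        have hyQ : c⁻¹ * z * c ∈ Qs i := (hcmem z).mp hz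
        have h1 : Commute σ (c⁻¹ * z * c) := (hQs_centXs i _ hyQ σ hσ).symm
        have h2 : Commute σ c := (hccent σ hσ).symm
        have h3 : Commute σ z := by
          have he : z = c * (c⁻¹ * z * c) * c⁻¹ := by group
          rw [he]
          exact (h2.mul_right h1).mul_right h2.inv_right
        exact h3.symm.eq
      · apply Set.mem_biUnion (show (1 : Equiv.Perm ℕ) ∈
          (symOn (ssupp (Xs i)) : Set (Equiv.Perm ℕ)) from (symOn _).one_mem)
        exact ⟨σ, hσ, by simp [conjR]⟩
  exact ⟨Xs, hXsmemS, hssuppXs, hXsP, hXprod, fun i => ⟨hXsExact i, hXsClosed i⟩,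
    Qs, hQsSyl, hQsup⟩

end FPS
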